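/- Let g : [0,∞) → [0,∞) and let s : [0,∞) → [0,∞) be nondecreasing such that for every y ≥ 0, s(y) is a global minimizer over σ ∈ [0,∞) of σ ↦ (1/2)(σ − y)² + ρ·g(σ), where ρ > 0. Let M be a real 2×2 matrix with singular value decomposition M = U · diag(σ₁, σ₂) · Vᵀ, where U, V are orthogonal and σ₁ ≥ σ₂ ≥ 0 are the singular values of M. Then H* := U · diag(s(σ₁), s(σ₂)) · Vᵀ is a global minimizer over H ∈ ℝ^{2×2} of the cost H ↦ (1/2)‖M − H‖_F² + ρ·( g(σ₁(H)) + g(σ₂(H)) ). -/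

import Mathlib

open Matrix

/-- Helper (removed from Mathlib): `Aᵀ * A` is Hermitian over a ring with trivial star. -/
theorem Matrix.isHermitian_transpose_mul_self {m n α : Type*} [Fintype m] [CommSemiring α]
    [StarRing α] [TrivialStar α] (A : Matrix m n α) : (Aᵀ * A).IsHermitian := by
  simp [IsHermitian, conjTranspose_mul, conjTranspose_eq_transpose_of_trivial]

/-- Singular values of a real `n × n` matrix, in decreasing order:
the square roots of the eigenvalues of `Aᵀ * A`, sorted decreasingly
(so `singularValues A 0` is the largest). -/
noncomputable def singularValues {n : ℕ} (A : Matrix (Fin n) (Fin n) ℝ) : Fin n → ℝ :=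
  fun i => Real.sqrt ((Matrix.isHermitian_transpose_mul_self A).eigenvalues
      (Tuple.sort (Matrix.isHermitian_transpose_mul_self A).eigenvalues i.rev))

/-!
Write `H = U A Vᵀ`. By orthogonal invariance `‖M - H‖_F = ‖diag(σ₁, σ₂) - A‖_F`, and `A` has the
singular values `t₀ ≥ t₁` of `H`. Von Neumann's trace inequality `σ₁ a₀₀ + σ₂ a₁₁ ≤ σ₁ t₀ + σ₂ t₁`
gives `‖M - H‖_F² ≥ (σ₁ - t₀)² + (σ₂ - t₁)²`, with equality for `H*`, whose singular values are
`s(σ₁) ≥ s(σ₂)` since `s` is monotone. So the cost is bounded below by two scalar proximal problems,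
each minimized by `s`.

In dimension two the singular values are the unique ordered pair `t₀ ≥ t₁ ≥ 0` with
`t₀² + t₁² = ‖A‖_F²` and `t₀ t₁ = |det A|`; this gives both the orthogonal invariance and an
elementary proof of the trace inequality.
-/

namespace Matrix

variable {m n : Type*} [Fintype m] [Fintype n]

lemma sum_sum_sq_eq_trace_transpose_mul (A : Matrix m n ℝ) :
    ∑ i, ∑ j, A i j ^ 2 = trace (Aᵀ * A) := by
  simp only [trace, diag, mul_apply, transpose_apply, sq]
  exact Finset.sum_comm

lemma sum_sum_sq_orthogonal_mul_mul [DecidableEq n] {U V : Matrix n n ℝ}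
    (hU : U ∈ orthogonalGroup n ℝ) (hV : V ∈ orthogonalGroup n ℝ) (A : Matrix n n ℝ) :
    ∑ i, ∑ j, (U * A * V) i j ^ 2 = ∑ i, ∑ j, A i j ^ 2 := by
  rw [sum_sum_sq_eq_trace_transpose_mul, sum_sum_sq_eq_trace_transpose_mul]
  calc trace ((U * A * V)ᵀ * (U * A * V)) = trace (Vᵀ * (Aᵀ * (Uᵀ * U) * A) * V) := by
        simp only [transpose_mul, Matrix.mul_assoc]
    _ = trace (Aᵀ * A) := by
        rw [(mem_orthogonalGroup_iff' n ℝ).mp hU, Matrix.mul_one, ← trace_mul_cycle,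
          Matrix.mul_assoc, (mem_orthogonalGroup_iff n ℝ).mp hV, Matrix.mul_one]

lemma abs_det_of_mem_orthogonalGroup [DecidableEq n] {U : Matrix n n ℝ}
    (hU : U ∈ orthogonalGroup n ℝ) : |U.det| = 1 := by
  have h := congrArg det ((mem_orthogonalGroup_iff' n ℝ).mp hU)
  rw [det_mul, det_transpose, det_one, ← sq] at h
  simpa using (sq_eq_sq_iff_abs_eq_abs U.det 1).mp (by simpa using h)

lemma abs_det_orthogonal_mul_mul [DecidableEq n] {U V : Matrix n n ℝ}
    (hU : U ∈ orthogonalGroup n ℝ) (hV : V ∈ orthogonalGroup n ℝ) (A : Matrix n n ℝ) :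
    |(U * A * V).det| = |A.det| := by
  rw [det_mul, det_mul, abs_mul, abs_mul, abs_det_of_mem_orthogonalGroup hU,
    abs_det_of_mem_orthogonalGroup hV, one_mul, mul_one]

lemma transpose_mem_orthogonalGroup [DecidableEq n] {U : Matrix n n ℝ}
    (hU : U ∈ orthogonalGroup n ℝ) : Uᵀ ∈ orthogonalGroup n ℝ := by
  rw [mem_orthogonalGroup_iff, transpose_transpose]
  exact (mem_orthogonalGroup_iff' n ℝ).mp hU

lemma sum_sum_sq_orthogonal_mul_mul_sub [DecidableEq n] {U V : Matrix n n ℝ}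
    (hU : U ∈ orthogonalGroup n ℝ) (hV : V ∈ orthogonalGroup n ℝ) (D H : Matrix n n ℝ) :
    ∑ i, ∑ j, (U * D * Vᵀ - H) i j ^ 2 = ∑ i, ∑ j, (D - Uᵀ * H * V) i j ^ 2 := by
  have hH : H = U * (Uᵀ * H * V) * Vᵀ := by
    simp only [← Matrix.mul_assoc, (mem_orthogonalGroup_iff n ℝ).mp hU, Matrix.one_mul]
    rw [Matrix.mul_assoc, (mem_orthogonalGroup_iff n ℝ).mp hV, Matrix.mul_one]
  rw [hH, ← Matrix.sub_mul, ← Matrix.mul_sub, ← hH]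
  exact sum_sum_sq_orthogonal_mul_mul hU (transpose_mem_orthogonalGroup hV) _

end Matrix

section SingularValues

variable {n : ℕ} (A : Matrix (Fin n) (Fin n) ℝ)

lemma singularValues_nonneg (i : Fin n) : 0 ≤ singularValues A i :=
  Real.sqrt_nonneg _

lemma singularValues_antitone : Antitone (singularValues A) := fun _ _ hij =>
  Real.sqrt_le_sqrt <|
    Tuple.monotone_sort (isHermitian_transpose_mul_self A).eigenvalues (Fin.rev_le_rev.mpr hij)

lemma sum_singularValues_sq : ∑ i, singularValues A i ^ 2 = ∑ i, ∑ j, A i j ^ 2 := by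
  have hA := isHermitian_transpose_mul_self A
  calc ∑ i, singularValues A i ^ 2
      = ∑ i, hA.eigenvalues ((Fin.revPerm.trans (Tuple.sort hA.eigenvalues)) i) :=
        Finset.sum_congr rfl fun i _ =>
          Real.sq_sqrt (eigenvalues_conjTranspose_mul_self_nonneg A _)
    _ = trace (Aᵀ * A) := by
        rw [Equiv.sum_comp, hA.trace_eq_sum_eigenvalues]; simp
    _ = ∑ i, ∑ j, A i j ^ 2 := (sum_sum_sq_eq_trace_transpose_mul A).symm

lemma prod_singularValues : ∏ i, singularValues A i = |A.det| := by
  have hA := isHermitian_transpose_mul_self A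
  calc ∏ i, singularValues A i
      = √(∏ i, hA.eigenvalues ((Fin.revPerm.trans (Tuple.sort hA.eigenvalues)) i)) :=
        (Real.sqrt_prod _ fun i _ => eigenvalues_conjTranspose_mul_self_nonneg A _).symm
    _ = √((Aᵀ * A).det) := by
        rw [Equiv.prod_comp, hA.det_eq_prod_eigenvalues]; simp
    _ = |A.det| := by
        rw [det_mul, det_transpose, ← sq, Real.sqrt_sq_eq_abs]

end SingularValues

lemma singularValues_fin_two_sq_add (A : Matrix (Fin 2) (Fin 2) ℝ) :
    singularValues A 0 ^ 2 + singularValues A 1 ^ 2 =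
      A 0 0 ^ 2 + A 0 1 ^ 2 + A 1 0 ^ 2 + A 1 1 ^ 2 := by
  have h := sum_singularValues_sq A
  simp only [Fin.sum_univ_two] at h
  linarith

lemma singularValues_fin_two_mul (A : Matrix (Fin 2) (Fin 2) ℝ) :
    singularValues A 0 * singularValues A 1 = |A 0 0 * A 1 1 - A 0 1 * A 1 0| := by
  rw [← det_fin_two, ← prod_singularValues, Fin.prod_univ_two]

lemma singularValues_fin_two_eq {A : Matrix (Fin 2) (Fin 2) ℝ} {t₀ t₁ : ℝ} (ht : t₁ ≤ t₀)
    (ht₁ : 0 ≤ t₁) (hsum : t₀ ^ 2 + t₁ ^ 2 = ∑ i, ∑ j, A i j ^ 2) (hprod : t₀ * t₁ = |A.det|) :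
    singularValues A = ![t₀, t₁] := by
  have hsum' := sum_singularValues_sq A
  have hprod' := prod_singularValues A
  simp only [Fin.sum_univ_two, Fin.prod_univ_two] at hsum hsum' hprod'
  have hmono := singularValues_antitone A (Fin.zero_le 1)
  have hnn := singularValues_nonneg A 1
  have hadd : singularValues A 0 + singularValues A 1 = t₀ + t₁ := by
    nlinarith [sq_nonneg (singularValues A 0 + singularValues A 1 - (t₀ + t₁)),
      sq_nonneg (singularValues A 0 + singularValues A 1 + (t₀ + t₁))]
  have hsub : singularValues A 0 - singularValues A 1 = t₀ - t₁ := by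
    nlinarith [sq_nonneg (singularValues A 0 - singularValues A 1 - (t₀ - t₁)),
      sq_nonneg (singularValues A 0 - singularValues A 1 + (t₀ - t₁))]
  ext i
  fin_cases i
  · simp only [Fin.zero_eta, cons_val_zero]; linarith
  · simp only [Fin.mk_one, cons_val_one, cons_val_fin_one]; linarith

lemma singularValues_orthogonal_mul_mul {U V : Matrix (Fin 2) (Fin 2) ℝ}
    (hU : U ∈ orthogonalGroup (Fin 2) ℝ) (hV : V ∈ orthogonalGroup (Fin 2) ℝ)
    (A : Matrix (Fin 2) (Fin 2) ℝ) : singularValues (U * A * V) = singularValues A := by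
  refine (singularValues_fin_two_eq (singularValues_antitone A (Fin.zero_le 1))
    (singularValues_nonneg A 1) ?_ ?_).trans ?_
  · rw [sum_sum_sq_orthogonal_mul_mul hU hV, ← sum_singularValues_sq, Fin.sum_univ_two]
  · rw [abs_det_orthogonal_mul_mul hU hV, ← prod_singularValues, Fin.prod_univ_two]
  · ext i
    fin_cases i <;> rfl

lemma singularValues_diagonal_fin_two {x y : ℝ} (hxy : y ≤ x) (hy : 0 ≤ y) :
    singularValues (diagonal ![x, y]) = ![x, y] := by
  refine singularValues_fin_two_eq hxy hy ?_ ?_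
  · simp [Fin.sum_univ_two]
  · simp [abs_of_nonneg (mul_nonneg (hy.trans hxy) hy)]

lemma add_le_singularValues_add (A : Matrix (Fin 2) (Fin 2) ℝ) :
    A 0 0 + A 1 1 ≤ singularValues A 0 + singularValues A 1 := by
  have hsum := singularValues_fin_two_sq_add A
  have hprod := singularValues_fin_two_mul A
  have hsq : (A 0 0 + A 1 1) ^ 2 ≤ (singularValues A 0 + singularValues A 1) ^ 2 := by
    nlinarith [sq_nonneg (A 0 1 - A 1 0), le_abs_self (A 0 0 * A 1 1 - A 0 1 * A 1 0)]
  exact le_of_sq_le_sq hsq (add_nonneg (singularValues_nonneg A 0) (singularValues_nonneg A 1))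

lemma le_singularValues_zero (A : Matrix (Fin 2) (Fin 2) ℝ) : A 0 0 ≤ singularValues A 0 := by
  set t₀ := singularValues A 0
  set t₁ := singularValues A 1
  have hsum := singularValues_fin_two_sq_add A
  have hprod : (t₀ * t₁) ^ 2 = (A 0 0 * A 1 1 - A 0 1 * A 1 0) ^ 2 := by
    rw [singularValues_fin_two_mul, sq_abs]
  -- `A 0 0 ^ 2 + A 1 0 ^ 2` is a diagonal entry of `Aᵀ * A`, hence between its eigenvalues
  have hcol : (A 0 0 ^ 2 + A 1 0 ^ 2 - t₀ ^ 2) * (A 0 0 ^ 2 + A 1 0 ^ 2 - t₁ ^ 2) =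
      -(A 0 0 * A 0 1 + A 1 0 * A 1 1) ^ 2 := by
    linear_combination (-(A 0 0 ^ 2 + A 1 0 ^ 2)) * hsum + hprod
  have hcol_le : A 0 0 ^ 2 + A 1 0 ^ 2 ≤ t₀ ^ 2 := by
    by_contra! hlt
    have ht : t₁ ^ 2 ≤ t₀ ^ 2 := pow_le_pow_left₀ (singularValues_nonneg A 1)
      (singularValues_antitone A (Fin.zero_le 1)) 2
    nlinarith [mul_pos (sub_pos.mpr hlt) (sub_pos.mpr (ht.trans_lt hlt)),
      sq_nonneg (A 0 0 * A 0 1 + A 1 0 * A 1 1)]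
  exact le_of_sq_le_sq (by nlinarith [sq_nonneg (A 1 0)]) (singularValues_nonneg A 0)

lemma mul_add_mul_le_singularValues {s₁ s₂ : ℝ} (hs : s₂ ≤ s₁) (hs₂ : 0 ≤ s₂)
    (A : Matrix (Fin 2) (Fin 2) ℝ) :
    s₁ * A 0 0 + s₂ * A 1 1 ≤ s₁ * singularValues A 0 + s₂ * singularValues A 1 := by
  -- `s₁ a + s₂ d = s₂ (a + d) + (s₁ - s₂) a`
  nlinarith [mul_le_mul_of_nonneg_left (add_le_singularValues_add A) hs₂,
    mul_le_mul_of_nonneg_left (le_singularValues_zero A) (sub_nonneg.mpr hs)]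

lemma sq_sub_singularValues_le_sum_sum_sq_diagonal_sub {σ₁ σ₂ : ℝ} (hσ : σ₂ ≤ σ₁)
    (hσ₂ : 0 ≤ σ₂) (A : Matrix (Fin 2) (Fin 2) ℝ) :
    (σ₁ - singularValues A 0) ^ 2 + (σ₂ - singularValues A 1) ^ 2 ≤
      ∑ i, ∑ j, (diagonal ![σ₁, σ₂] - A) i j ^ 2 := by
  have hvn := mul_add_mul_le_singularValues hσ hσ₂ A
  have hsum := singularValues_fin_two_sq_add A
  simp only [Fin.sum_univ_two, Matrix.sub_apply, diagonal_apply_eq,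
    diagonal_apply_ne _ Fin.zero_ne_one, diagonal_apply_ne _ Fin.zero_ne_one.symm, cons_val_zero,
    cons_val_one, cons_val_fin_one]
  nlinarith

theorem svd_shrinkage_minimizes_prox_general
    (g s : ℝ → ℝ) (ρ : ℝ)
    (hs_mono : MonotoneOn s (Set.Ici 0))
    (hs_nonneg : ∀ y ∈ Set.Ici (0 : ℝ), 0 ≤ s y)
    (hs_min : ∀ y ∈ Set.Ici (0 : ℝ), ∀ σ ∈ Set.Ici (0 : ℝ),
      (1 / 2) * (s y - y) ^ 2 + ρ * g (s y) ≤ (1 / 2) * (σ - y) ^ 2 + ρ * g σ)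
    (M U V : Matrix (Fin 2) (Fin 2) ℝ) (σ₁ σ₂ : ℝ)
    (hU : U ∈ Matrix.orthogonalGroup (Fin 2) ℝ)
    (hV : V ∈ Matrix.orthogonalGroup (Fin 2) ℝ)
    (hord : σ₁ ≥ σ₂) (hσ₂ : σ₂ ≥ 0)
    (hM : M = U * Matrix.diagonal ![σ₁, σ₂] * Vᵀ) :
    ∀ H : Matrix (Fin 2) (Fin 2) ℝ,
      (1 / 2) * (∑ i : Fin 2, ∑ j : Fin 2,
          (M i j - (U * Matrix.diagonal ![s σ₁, s σ₂] * Vᵀ) i j) ^ 2) +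
        ρ * (g (singularValues (U * Matrix.diagonal ![s σ₁, s σ₂] * Vᵀ) 0) +
             g (singularValues (U * Matrix.diagonal ![s σ₁, s σ₂] * Vᵀ) 1)) ≤
      (1 / 2) * (∑ i : Fin 2, ∑ j : Fin 2, (M i j - H i j) ^ 2) +
        ρ * (g (singularValues H 0) + g (singularValues H 1)) := by
  intro H
  subst hM
  have hσ₁ : 0 ≤ σ₁ := hσ₂.trans hord
  have hs_ord : s σ₂ ≤ s σ₁ := hs_mono hσ₂ hσ₁ hord
  have hsv_shrunk : singularValues (U * diagonal ![s σ₁, s σ₂] * Vᵀ) = ![s σ₁, s σ₂] := by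
    rw [singularValues_orthogonal_mul_mul hU (transpose_mem_orthogonalGroup hV),
      singularValues_diagonal_fin_two hs_ord (hs_nonneg σ₂ hσ₂)]
  have hdist_shrunk :
      ∑ i, ∑ j, (U * diagonal ![σ₁, σ₂] * Vᵀ - U * diagonal ![s σ₁, s σ₂] * Vᵀ) i j ^ 2 =
        (σ₁ - s σ₁) ^ 2 + (σ₂ - s σ₂) ^ 2 := by
    rw [← Matrix.sub_mul, ← Matrix.mul_sub,
      sum_sum_sq_orthogonal_mul_mul hU (transpose_mem_orthogonalGroup hV)]
    simp [Fin.sum_univ_two]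
  have hdist : (σ₁ - singularValues H 0) ^ 2 + (σ₂ - singularValues H 1) ^ 2 ≤
      ∑ i, ∑ j, (U * diagonal ![σ₁, σ₂] * Vᵀ - H) i j ^ 2 := by
    rw [sum_sum_sq_orthogonal_mul_mul_sub hU hV, ← singularValues_orthogonal_mul_mul
      (transpose_mem_orthogonalGroup hU) hV H]
    exact sq_sub_singularValues_le_sum_sum_sq_diagonal_sub hord hσ₂ _
  have h₁ := hs_min σ₁ hσ₁ (singularValues H 0) (singularValues_nonneg H 0)
  have h₂ := hs_min σ₂ hσ₂ (singularValues H 1) (singularValues_nonneg H 1)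
  simp only [Matrix.sub_apply] at hdist_shrunk hdist
  rw [hsv_shrunk, hdist_shrunk]
  simp only [cons_val_zero, cons_val_one, cons_val_fin_one]
  linarith [sub_sq_comm σ₁ (s σ₁), sub_sq_comm σ₂ (s σ₂), sub_sq_comm σ₁ (singularValues H 0),
    sub_sq_comm σ₂ (singularValues H 1)]

/-- closed-form solution of the matrix proximal step for a spectral penalty.
If `s(y)` minimizes `σ ↦ ½(σ − y)² + ρ g(σ)` over `σ ≥ 0` for each `y ≥ 0`, `s` is
nondecreasing (and nonnegative) on `[0,∞)`, and `M = U·diag(σ₁,σ₂)·Vᵀ` is an SVD of `M`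
(with `σ₁ ≥ σ₂ ≥ 0` the singular values of `M`), then `H* = U·diag(s(σ₁),s(σ₂))·Vᵀ`
globally minimizes `H ↦ ½‖M − H‖_F² + ρ(g(σ₁(H)) + g(σ₂(H)))`. -/
theorem svd_shrinkage_minimizes_prox
    (g s : ℝ → ℝ) (ρ : ℝ) (hρ : 0 < ρ)
    (hs_mono : MonotoneOn s (Set.Ici 0))
    (hs_nonneg : ∀ y ∈ Set.Ici (0 : ℝ), 0 ≤ s y)
    (hs_min : ∀ y ∈ Set.Ici (0 : ℝ), ∀ σ ∈ Set.Ici (0 : ℝ),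
      (1 / 2) * (s y - y) ^ 2 + ρ * g (s y) ≤ (1 / 2) * (σ - y) ^ 2 + ρ * g σ)
    (M U V : Matrix (Fin 2) (Fin 2) ℝ) (σ₁ σ₂ : ℝ)
    (hU : U ∈ Matrix.orthogonalGroup (Fin 2) ℝ)
    (hV : V ∈ Matrix.orthogonalGroup (Fin 2) ℝ)
    (hord : σ₁ ≥ σ₂) (hσ₂ : σ₂ ≥ 0)
    (hM : M = U * Matrix.diagonal ![σ₁, σ₂] * Vᵀ)
    (hσ₁sv : σ₁ = singularValues M 0) (hσ₂sv : σ₂ = singularValues M 1) :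
    ∀ H : Matrix (Fin 2) (Fin 2) ℝ,
      (1 / 2) * (∑ i : Fin 2, ∑ j : Fin 2,
          (M i j - (U * Matrix.diagonal ![s σ₁, s σ₂] * Vᵀ) i j) ^ 2) +
        ρ * (g (singularValues (U * Matrix.diagonal ![s σ₁, s σ₂] * Vᵀ) 0) +
             g (singularValues (U * Matrix.diagonal ![s σ₁, s σ₂] * Vᵀ) 1)) ≤
      (1 / 2) * (∑ i : Fin 2, ∑ j : Fin 2, (M i j - H i j) ^ 2) +
        ρ * (g (singularValues H 0) + g (singularValues H 1)) :=
  svd_shrinkage_minimizes_prox_general g s ρ hs_mono hs_nonneg hs_min M U V σ₁ σ₂ hU hV hord hσ₂ hM
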